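/- Assume ‖U_t‖ ≤ 3‖X‖, μ ≤ (1/27)·‖X‖⁻², and ‖(𝒜*𝒜 − ℐ)(X*Xᵀ − U_t*U_tᵀ)‖ ≤ ‖X‖². Then the next gradient descent iterate satisfies ‖U_{t+1}‖ ≤ 3‖X‖. -/

import Mathlib

/-!
Fourier slices turn the tubal step into `k` independent matrix steps
`U ↦ (1 + μ (X Xᴴ - U Uᴴ + E)) U = U (1 - μ UᴴU) + μ (X Xᴴ + E) U`, with `E` the slice of
`(𝒜*𝒜 - ℐ)(X*Xᵀ - U*Uᵀ)`. The singular values of `U (1 - μ UᴴU)` are `σ - μσ³`, and this map is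
increasing on `[0, 3‖X‖]` because `27 μ ‖X‖² ≤ 1`; so the main term has norm at most
`3‖X‖ - 27μ‖X‖³`, while the perturbation costs at most `6μ‖X‖³`.
-/

open scoped BigOperators ComplexOrder
open MeasureTheory

namespace Tubal

/-- A real tubal tensor of size `m × n × k`. -/
abbrev Tensor (m n k : ℕ) := Fin m → Fin n → Fin k → ℝ

/-- The `j`-th Fourier-domain (frontal) slice of a tubal tensor. -/
noncomputable def slice {m n k : ℕ} (T : Tensor m n k) (j : Fin k) :
    Matrix (Fin m) (Fin n) ℂ := fun i i' =>
  ∑ j' : Fin k, (T i i' j' : ℂ) *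
    Complex.exp (-(2 * (Real.pi : ℂ) * Complex.I * ((j : ℕ) : ℂ) * ((j' : ℕ) : ℂ)) / ((k : ℕ) : ℂ))

/-- The tubal product (t-product) of two tubal tensors. -/
def tprod {m q n k : ℕ} (A : Tensor m q k) (B : Tensor q n k) : Tensor m n k :=
  fun i i' l => ∑ p : Fin q, ∑ l' : Fin k, A i p l' * B p i' (l - l')

/-- The tubal transpose. -/
def ttr {m n k : ℕ} (T : Tensor m n k) : Tensor n m k := fun i i' j => T i' i (-j)

/-- The identity tubal tensor. -/
def tId (n k : ℕ) : Tensor n n k := fun i i' j => if i = i' ∧ (j : ℕ) = 0 then 1 else 0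

/-- Frobenius norm of a tubal tensor. -/
noncomputable def frobNorm {m n k : ℕ} (T : Tensor m n k) : ℝ :=
  Real.sqrt (∑ i, ∑ i', ∑ j, (T i i' j) ^ 2)

/-- Entrywise inner product of tubal tensors. -/
def tinner {m n k : ℕ} (T S : Tensor m n k) : ℝ := ∑ i, ∑ i', ∑ j, T i i' j * S i i' j

/-- ℓ₂-operator norm of a complex matrix. -/
noncomputable def matOpNorm {m n : ℕ} (M : Matrix (Fin m) (Fin n) ℂ) : ℝ :=
  ‖LinearMap.toContinuousLinearMap (Matrix.toEuclideanLin M)‖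

/-- Tensor spectral norm: max over Fourier slices of operator norm. -/
noncomputable def specNorm {m n k : ℕ} (T : Tensor m n k) : ℝ :=
  ⨆ j : Fin k, matOpNorm (slice T j)

/-- `i`-th largest singular value (0-based index into `Fin n`). -/
noncomputable def svalIdx {m n : ℕ} (M : Matrix (Fin m) (Fin n) ℂ) (i : Fin n) : ℝ :=
  Real.sqrt (((Matrix.isHermitian_conjTranspose_mul_self M).eigenvalues)
    ((Tuple.sort ((Matrix.isHermitian_conjTranspose_mul_self M).eigenvalues)) i.rev))

/-- `i`-th largest singular value of a matrix, `1`-based (σ₁ is the largest). -/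
noncomputable def sval {m n : ℕ} (M : Matrix (Fin m) (Fin n) ℂ) (i : ℕ) : ℝ :=
  if h : i - 1 < n then svalIdx M ⟨i - 1, h⟩ else 0

/-- Smallest singular value of an `m × n` matrix. -/
noncomputable def sminMat {m n : ℕ} (M : Matrix (Fin m) (Fin n) ℂ) : ℝ :=
  sval M (min m n)

/-- σ_min of the block-diagonal Fourier representation of a tensor:
the minimum over slices of the smallest singular value. -/
noncomputable def tSMin {m n k : ℕ} (T : Tensor m n k) : ℝ :=
  ⨅ j : Fin k, sminMat (slice T j)

/-- The tubal rank: maximum over slices of the matrix rank. -/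
noncomputable def trank {m n k : ℕ} (T : Tensor m n k) : ℕ :=
  Finset.univ.sup fun j : Fin k => (slice T j).rank

/-- Condition number `κ(T) = σ₁(T̄)/σ_{min{m,n}k}(T̄)`. -/
noncomputable def cond {m n k : ℕ} (T : Tensor m n k) : ℝ := specNorm T / tSMin T

/-- Tensor nuclear norm `(1/k)·Σ_{j,i} σ_i(T̄^{(j)})`. -/
noncomputable def nucNorm {m n k : ℕ} (T : Tensor m n k) : ℝ :=
  (1 / (k : ℝ)) * ∑ j : Fin k, ∑ i : Fin n, svalIdx (slice T j) i

/-- The linear measurement map `𝒜`. -/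
def Ameas {n k m : ℕ} (A : Fin m → Tensor n n k) (Z : Tensor n n k) : Fin m → ℝ :=
  fun i => tinner (A i) Z

/-- `𝒜*𝒜`. -/
def AtA {n k m : ℕ} (A : Fin m → Tensor n n k) (Z : Tensor n n k) : Tensor n n k :=
  fun p q l => ∑ i, tinner (A i) Z * A i p q l

/-- Restricted isometry property of rank `r` with constant `δ`. -/
def RIP {n k m : ℕ} (A : Fin m → Tensor n n k) (r : ℕ) (δ : ℝ) : Prop :=
  ∀ Z : Tensor n n k, ttr Z = Z → trank Z ≤ r →
    (1 - δ) * frobNorm Z ^ 2 ≤ ∑ i, (tinner (A i) Z) ^ 2 ∧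
      ∑ i, (tinner (A i) Z) ^ 2 ≤ (1 + δ) * frobNorm Z ^ 2

/-- Spectral-to-nuclear restricted isometry property. -/
def S2NRIP {n k m : ℕ} (A : Fin m → Tensor n n k) (δ : ℝ) : Prop :=
  ∀ Z : Tensor n n k, ttr Z = Z → specNorm (Z - AtA A Z) ≤ δ * nucNorm Z

/-- One gradient-descent step `U ↦ [𝕀 + μ(𝒜*𝒜)(X*Xᵀ − U*Uᵀ)]*U`. -/
noncomputable def gdStep {n r R k m : ℕ} (A : Fin m → Tensor n n k) (X : Tensor n r k)
    (μ : ℝ) (U : Tensor n R k) : Tensor n R k :=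
  tprod (tId n k + μ • AtA A (tprod X (ttr X) - tprod U (ttr U))) U

/-- Gradient descent iterates. -/
noncomputable def gdIter {n r R k m : ℕ} (A : Fin m → Tensor n n k) (X : Tensor n r k)
    (μ : ℝ) (U0 : Tensor n R k) : ℕ → Tensor n R k
  | 0 => U0
  | t + 1 => gdStep A X μ (gdIter A X μ U0 t)

/-- `t`-fold tubal power. -/
noncomputable def tpow {n k : ℕ} (T : Tensor n n k) : ℕ → Tensor n n k
  | 0 => tId n k
  | t + 1 => tprod T (tpow T t)

/-- Block-diagonal Fourier-domain matrix representation of a tensor. -/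
noncomputable def bdiag {m n k : ℕ} (T : Tensor m n k) :
    Matrix (Fin k × Fin m) (Fin k × Fin n) ℂ :=
  fun p q => if p.1 = q.1 then slice T p.1 p.2 q.2 else 0

/-- ℓ₂ norm of a complex vector. -/
noncomputable def l2norm {ι : Type*} [Fintype ι] (w : ι → ℂ) : ℝ :=
  Real.sqrt (∑ i, Complex.normSq (w i))

/-- i.i.d. Gaussian measure on tubal tensors, each entry `N(0, v)`. -/
noncomputable def gaussianTensor (n R k : ℕ) (v : NNReal) : Measure (Tensor n R k) :=
  Measure.pi fun _ => Measure.pi fun _ => Measure.pi fun _ =>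
    ProbabilityTheory.gaussianReal 0 v

/-- The first `r` tensor columns. -/
def cols {a p k : ℕ} (T : Tensor a p k) (r : ℕ) (h : r ≤ p) : Tensor a r k :=
  fun i s j => T i (Fin.castLE h s) j

/-- `W` is orthonormal: `Wᵀ*W = 𝕀`. -/
def ONB {p q k : ℕ} (W : Tensor p q k) : Prop := tprod (ttr W) W = tId q k

/-- `Q` is an orthogonal tubal tensor. -/
def Orthogonal {p k : ℕ} (Q : Tensor p p k) : Prop :=
  tprod Q (ttr Q) = tId p k ∧ tprod (ttr Q) Q = tId p k

/-- `V` is an orthonormal basis for the tensor-column space of `Y`. -/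
def IsColBasis {a b q k : ℕ} (Y : Tensor a b k) (V : Tensor a q k) : Prop :=
  ONB V ∧ tprod V (tprod (ttr V) Y) = Y

/-- `Vp` is an orthonormal complement of the orthonormal `V`. -/
def IsOrthCompl {a q q' k : ℕ} (V : Tensor a q k) (Vp : Tensor a q' k) : Prop :=
  ONB Vp ∧ tprod (ttr Vp) V = 0 ∧
    tprod V (ttr V) + tprod Vp (ttr Vp) = tId a k

/-- `S` is an f-diagonal tensor with nonnegative, nonincreasing (real) diagonal in
every Fourier slice: the middle factor of a t-SVD. -/
def IsFDiagSorted {p q k : ℕ} (S : Tensor p q k) : Prop :=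
  (∀ j : Fin k, ∀ i : Fin p, ∀ i' : Fin q, (i : ℕ) ≠ (i' : ℕ) → slice S j i i' = 0) ∧
  (∀ j : Fin k, ∀ i : Fin p, ∀ i' : Fin q, (i : ℕ) = (i' : ℕ) →
    (slice S j i i').im = 0 ∧ 0 ≤ (slice S j i i').re) ∧
  (∀ j : Fin k, ∀ i₁ i₂ : Fin p, ∀ i₁' i₂' : Fin q, (i₁ : ℕ) = (i₁' : ℕ) →
    (i₂ : ℕ) = (i₂' : ℕ) → (i₁ : ℕ) ≤ (i₂ : ℕ) →
    (slice S j i₂ i₂').re ≤ (slice S j i₁ i₁').re)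

/-- `(V, S, W)` is a t-SVD of `T`. -/
def IsTSVD {p q k : ℕ} (T : Tensor p q k) (V : Tensor p p k) (S : Tensor p q k)
    (W : Tensor q q k) : Prop :=
  Orthogonal V ∧ Orthogonal W ∧ IsFDiagSorted S ∧ T = tprod V (tprod S (ttr W))

end Tubal

open scoped Matrix Matrix.Norms.L2Operator MatrixOrder

theorem mul_one_sub_mul_sq_le {μ c x : ℝ} (hμ : 0 ≤ μ) (hc : 3 * μ * c ≤ 1) (hx0 : 0 ≤ x)
    (hxc : x ≤ c) : x * (1 - μ * x) ^ 2 ≤ c * (1 - μ * c) ^ 2 := by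
  have hy : μ * x ≤ μ * c := mul_le_mul_of_nonneg_left hxc hμ
  have hy0 : 0 ≤ μ * x := mul_nonneg hμ hx0
  have hbr : μ * c * (μ * x) ≤ (1 - μ * c - μ * x) ^ 2 := by
    rw [sq]; apply mul_le_mul <;> linarith
  have key : c * (1 - μ * c) ^ 2 - x * (1 - μ * x) ^ 2 =
      (c - x) * ((1 - μ * c - μ * x) ^ 2 - μ * c * (μ * x)) := by ring
  nlinarith [mul_nonneg (sub_nonneg.2 hxc) (sub_nonneg.2 hbr)]

theorem norm_one_sub_smul_mul_mul_one_sub_smul_le {A : Type*} [CStarAlgebra A]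
    [PartialOrder A] [StarOrderedRing A] {q : A} (hq : 0 ≤ q) {μ c : ℝ} (hμ : 0 ≤ μ)
    (hqc : ‖q‖ ≤ c) (hc : 3 * μ * c ≤ 1) :
    ‖(1 - μ • q) * q * (1 - μ • q)‖ ≤ c * (1 - μ * c) ^ 2 := by
  have hcfc : cfc (fun x : ℝ => (1 - μ * x) * x * (1 - μ * x)) q =
      (1 - μ • q) * q * (1 - μ • q) := by
    rw [cfc_mul _ _ q, cfc_mul _ _ q, cfc_sub _ _ q, cfc_const_one ℝ q, cfc_const_mul _ _ q,
      cfc_id' ℝ q]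
  rw [← hcfc]
  have hc0 : 0 ≤ c := (norm_nonneg q).trans hqc
  refine norm_cfc_le (by positivity) fun x hx => ?_
  have hx0 : 0 ≤ x := spectrum_nonneg_of_nonneg hq hx
  have hxc : x ≤ c := (le_abs_self x).trans <|
    (IsometricContinuousFunctionalCalculus.norm_spectrum_le q hx).trans hqc
  have hf : (1 - μ * x) * x * (1 - μ * x) = x * (1 - μ * x) ^ 2 := by ring
  rw [hf, Real.norm_of_nonneg (by positivity)]
  exact mul_one_sub_mul_sq_le hμ hc hx0 hxc

namespace Matrix

variable {m n : Type*} [Fintype m] [Fintype n] [DecidableEq n]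

theorem l2_opNorm_mul_one_sub_smul_conjTranspose_mul_self_le (U : Matrix m n ℂ) {μ b : ℝ}
    (hμ : 0 ≤ μ) (hU : ‖U‖ ≤ b) (hb : 3 * μ * b ^ 2 ≤ 1) :
    ‖U * (1 - μ • (Uᴴ * U))‖ ≤ b - μ * b ^ 3 := by
  set Q := Uᴴ * U
  have hQ : 0 ≤ Q := (posSemidef_conjTranspose_mul_self U).nonneg
  have hb0 : 0 ≤ b := (norm_nonneg U).trans hU
  have hQb : ‖Q‖ ≤ b ^ 2 := by
    rw [l2_opNorm_conjTranspose_mul_self, sq]; exact mul_le_mul hU hU (norm_nonneg U) hb0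
  have hstar : (U * (1 - μ • Q))ᴴ * (U * (1 - μ • Q)) = (1 - μ • Q) * Q * (1 - μ • Q) := by
    have hsa : (1 - μ • Q)ᴴ = 1 - μ • Q := by
      simp [Q, conjTranspose_sub, conjTranspose_smul, conjTranspose_mul]
    rw [conjTranspose_mul, hsa, Matrix.mul_assoc, ← Matrix.mul_assoc Uᴴ, ← Matrix.mul_assoc]
  have hsq : ‖U * (1 - μ • Q)‖ ^ 2 ≤ (b - μ * b ^ 3) ^ 2 := by
    calc ‖U * (1 - μ • Q)‖ ^ 2 = ‖(1 - μ • Q) * Q * (1 - μ • Q)‖ := by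
          rw [← hstar, l2_opNorm_conjTranspose_mul_self, sq]
      _ ≤ b ^ 2 * (1 - μ * b ^ 2) ^ 2 := norm_one_sub_smul_mul_mul_one_sub_smul_le hQ hμ hQb hb
      _ = (b - μ * b ^ 3) ^ 2 := by ring
  have hbound : 0 ≤ b - μ * b ^ 3 := by nlinarith
  exact (pow_le_pow_iff_left₀ (norm_nonneg _) hbound two_ne_zero).1 hsq

theorem l2_opNorm_one_add_smul_mul_le [DecidableEq m] {r : Type*} [Fintype r] [DecidableEq r]
    (X : Matrix m r ℂ) (U : Matrix m n ℂ) (E : Matrix m m ℂ) {μ a : ℝ} (hμ : 0 ≤ μ)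
    (hμa : 27 * μ * a ^ 2 ≤ 1) (hX : ‖X‖ ≤ a) (hU : ‖U‖ ≤ 3 * a) (hE : ‖E‖ ≤ a ^ 2) :
    ‖(1 + μ • (X * Xᴴ - U * Uᴴ + E)) * U‖ ≤ 3 * a := by
  have ha : 0 ≤ a := by linarith [(norm_nonneg X).trans hX]
  have hsplit : (1 + μ • (X * Xᴴ - U * Uᴴ + E)) * U =
      U * (1 - μ • (Uᴴ * U)) + μ • ((X * Xᴴ + E) * U) := by
    simp only [Matrix.add_mul, Matrix.sub_mul, Matrix.mul_sub, Matrix.smul_mul, Matrix.mul_smul,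
      Matrix.one_mul, Matrix.mul_one, Matrix.mul_assoc, smul_add, smul_sub]
    abel
  have hXX : ‖X * Xᴴ‖ ≤ a ^ 2 := by
    calc ‖X * Xᴴ‖ ≤ ‖X‖ * ‖Xᴴ‖ := l2_opNorm_mul _ _
      _ ≤ a ^ 2 := by rw [l2_opNorm_conjTranspose, sq]; exact mul_le_mul hX hX (norm_nonneg X) ha
  have hrest : ‖μ • ((X * Xᴴ + E) * U)‖ ≤ μ * (2 * a ^ 2 * (3 * a)) := by
    rw [norm_smul, Real.norm_of_nonneg hμ]
    gcongr
    calc ‖(X * Xᴴ + E) * U‖ ≤ ‖X * Xᴴ + E‖ * ‖U‖ := l2_opNorm_mul _ _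
      _ ≤ 2 * a ^ 2 * (3 * a) := by
        gcongr
        exact (norm_add_le _ _).trans (by linarith)
  calc ‖(1 + μ • (X * Xᴴ - U * Uᴴ + E)) * U‖
      ≤ ‖U * (1 - μ • (Uᴴ * U))‖ + ‖μ • ((X * Xᴴ + E) * U)‖ := hsplit ▸ norm_add_le _ _
    _ ≤ (3 * a - μ * (3 * a) ^ 3) + μ * (2 * a ^ 2 * (3 * a)) := by
        gcongr
        exact l2_opNorm_mul_one_sub_smul_conjTranspose_mul_self_le U hμ hU (by linarith)
    _ ≤ 3 * a := by nlinarith [mul_nonneg hμ (pow_nonneg ha 3)]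

end Matrix

namespace Tubal

section SliceLinear

variable {m n k : ℕ}

theorem slice_add (T S : Tensor m n k) (j : Fin k) : slice (T + S) j = slice T j + slice S j := by
  ext i i'
  simp only [slice, Matrix.add_apply, Pi.add_apply, Complex.ofReal_add, add_mul,
    Finset.sum_add_distrib]

theorem slice_sub (T S : Tensor m n k) (j : Fin k) : slice (T - S) j = slice T j - slice S j := by
  ext i i'
  simp only [slice, Matrix.sub_apply, Pi.sub_apply, Complex.ofReal_sub, sub_mul,
    Finset.sum_sub_distrib]

theorem slice_smul (c : ℝ) (T : Tensor m n k) (j : Fin k) : slice (c • T) j = c • slice T j := by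
  ext i i'
  simp only [slice, Matrix.smul_apply, Pi.smul_apply, smul_eq_mul, Complex.ofReal_mul,
    Finset.smul_sum, Complex.real_smul, mul_assoc]

end SliceLinear

section Fourier

variable {k : ℕ} [NeZero k]

noncomputable def fourierChar (j : Fin k) : AddChar (Fin k) ℂ where
  toFun l := Complex.exp (-(2 * (Real.pi : ℂ) * Complex.I * ((j : ℕ) : ℂ) * ((l : ℕ) : ℂ)) /
    ((k : ℕ) : ℂ))
  map_zero_eq_one' := by simp
  map_add_eq_mul' a b := by
    have hk : (k : ℂ) ≠ 0 := Nat.cast_ne_zero.2 j.pos.ne'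
    set ζ := Complex.exp (-(2 * (Real.pi : ℂ) * Complex.I) / k)
    have hpow : ∀ v : ℕ, Complex.exp (-(2 * (Real.pi : ℂ) * Complex.I * ((j : ℕ) : ℂ) * (v : ℂ)) /
        (k : ℂ)) = ζ ^ ((j : ℕ) * v) := fun v => by
      rw [← Complex.exp_nat_mul]; congr 1; push_cast; ring
    have hζ : ζ ^ k = 1 := by
      rw [← Complex.exp_nat_mul, mul_div_cancel₀ _ hk, Complex.exp_neg, Complex.exp_two_pi_mul_I,
        inv_one]
    simp only [hpow, ← pow_add]
    rw [pow_eq_pow_mod _ hζ, pow_eq_pow_mod (_ + _) hζ, Fin.val_add, ← mul_add, Nat.mul_mod,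
      Nat.mod_mod, ← Nat.mul_mod]

theorem slice_apply {m n : ℕ} (T : Tensor m n k) (j : Fin k) (i : Fin m) (i' : Fin n) :
    slice T j i i' = ∑ l, (T i i' l : ℂ) * fourierChar j l := rfl

theorem slice_tId (n : ℕ) (j : Fin k) : slice (tId n k) j = 1 := by
  ext i i'
  rw [slice_apply, Finset.sum_eq_single 0]
  · by_cases h : i = i' <;> simp [tId, h, Matrix.one_apply]
  · intro l _ hl
    simp [tId, Fin.val_eq_zero_iff, hl]
  · simp

theorem slice_tprod {m q n : ℕ} (A : Tensor m q k) (B : Tensor q n k) (j : Fin k) :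
    slice (tprod A B) j = slice A j * slice B j := by
  ext i i'
  simp only [slice_apply, Matrix.mul_apply, tprod, Complex.ofReal_sum, Complex.ofReal_mul,
    Finset.sum_mul, Finset.mul_sum]
  rw [Finset.sum_comm]
  refine Finset.sum_congr rfl fun p _ => ?_
  conv_rhs => rw [Finset.sum_comm]
  rw [Finset.sum_comm]
  refine Finset.sum_congr rfl fun a _ => ?_
  refine Fintype.sum_equiv (Equiv.subRight a) _ _ fun l => ?_
  have hχ : fourierChar j l = fourierChar j a * fourierChar j (l - a) := by
    rw [← AddChar.map_add_eq_mul, add_sub_cancel]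
  rw [Equiv.subRight_apply, hχ]
  ring

theorem slice_ttr {m n : ℕ} (T : Tensor m n k) (j : Fin k) :
    slice (ttr T) j = (slice T j).conjTranspose := by
  ext i i'
  simp only [slice_apply, Matrix.conjTranspose_apply, ttr, star_sum, star_mul', Complex.star_def,
    Complex.conj_ofReal, ← AddChar.map_neg_eq_conj]
  exact Fintype.sum_equiv (Equiv.neg _) _ _ fun l => by simp

end Fourier

theorem matOpNorm_eq_norm {m n : ℕ} (M : Matrix (Fin m) (Fin n) ℂ) : matOpNorm M = ‖M‖ :=
  (Matrix.l2_opNorm_def M).symm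

theorem specNorm_nonneg {m n k : ℕ} (T : Tensor m n k) : 0 ≤ specNorm T :=
  Real.iSup_nonneg fun _ => norm_nonneg _

theorem norm_slice_le_specNorm {m n k : ℕ} (T : Tensor m n k) (j : Fin k) :
    ‖slice T j‖ ≤ specNorm T := by
  rw [← matOpNorm_eq_norm]
  exact le_ciSup (Set.finite_range fun j => matOpNorm (slice T j)).bddAbove j

theorem slice_gdStep {n r R k m : ℕ} [NeZero k] (A : Fin m → Tensor n n k) (X : Tensor n r k)
    (μ : ℝ) (U : Tensor n R k) (j : Fin k) :
    slice (gdStep A X μ U) j =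
      (1 + μ • (slice X j * (slice X j)ᴴ - slice U j * (slice U j)ᴴ +
        slice (AtA A (tprod X (ttr X) - tprod U (ttr U)) -
          (tprod X (ttr X) - tprod U (ttr U))) j)) * slice U j := by
  rw [gdStep, slice_tprod, slice_add, slice_tId, slice_smul, slice_sub, slice_sub, slice_tprod,
    slice_tprod, slice_ttr, slice_ttr, add_sub_cancel]

theorem statement15_general {n r R k m : ℕ} (A : Fin m → Tensor n n k)
    (X : Tensor n r k)
    (μ : ℝ) (hμ0 : 0 < μ) (U : Tensor n R k)
    (hU : specNorm U ≤ 3 * specNorm X)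
    (hμ : μ ≤ (1 / 27) * (specNorm X ^ 2)⁻¹)
    (hdev : specNorm
      (AtA A (tprod X (ttr X) - tprod U (ttr U)) - (tprod X (ttr X) - tprod U (ttr U)))
        ≤ specNorm X ^ 2) :
    specNorm (gdStep A X μ U) ≤ 3 * specNorm X := by
  have hX := specNorm_nonneg X
  have hμX : 27 * μ * specNorm X ^ 2 ≤ 1 := by
    rcases hX.eq_or_lt with hX0 | hXpos
    · simp [← hX0]
    · linarith [(le_mul_inv_iff₀ (by positivity)).1 hμ]
  refine Real.iSup_le (fun j => ?_) (by positivity)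
  have : NeZero k := ⟨j.pos.ne'⟩
  rw [matOpNorm_eq_norm, slice_gdStep]
  exact Matrix.l2_opNorm_one_add_smul_mul_le _ _ _ hμ0.le hμX (norm_slice_le_specNorm X j)
    ((norm_slice_le_specNorm U j).trans hU) ((norm_slice_le_specNorm _ j).trans hdev)

/-- If `‖U_t‖ ≤ 3‖X‖`, `μ ≤ (1/27)·‖X‖⁻²`, and
`‖(𝒜*𝒜 − ℐ)(X*Xᵀ − U_t*U_tᵀ)‖ ≤ ‖X‖²`, then `‖U_{t+1}‖ ≤ 3‖X‖`. -/
theorem statement15 {n r R k m : ℕ} (A : Fin m → Tensor n n k)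
    (hAsym : ∀ i, ttr (A i) = A i)
    (X : Tensor n r k) (hr : r ≤ n) (hrank : trank X = r)
    (μ : ℝ) (hμ0 : 0 < μ) (U : Tensor n R k)
    (hU : specNorm U ≤ 3 * specNorm X)
    (hμ : μ ≤ (1 / 27) * (specNorm X ^ 2)⁻¹)
    (hdev : specNorm
      (AtA A (tprod X (ttr X) - tprod U (ttr U)) - (tprod X (ttr X) - tprod U (ttr U)))
        ≤ specNorm X ^ 2) :
    specNorm (gdStep A X μ U) ≤ 3 * specNorm X :=
  statement15_general A X μ hμ0 U hU hμ hdev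

end Tubal
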